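/- Let Ω ⊆ ℝ^ν be a measurable set and let ρ, δ, σ, ε, τ, M, γ > 0 be constants. Let W_c : ℝ → ℝ be convex differentiable, W_e : ℝ → ℝ be concave differentiable, and W = W_c + W_e. Let φⁿ, φ^{n+1}, μ : ℝ^ν → ℝ and vⁿ, v : ℝ^ν → ℝ^ν be differentiable functions, p : ℝ^ν → ℝ a function, and D : ℝ^ν → ℝ a nonnegative function (the drag coefficient d(φ̃_fⁿ, ε)). Set ρ̃ⁿ = ρ(φⁿ + δ), ρ̃^{n+1} = ρ(φ^{n+1} + δ), φ̃^{n+1} = 2δ + (1−2δ)φ^{n+1}. Assume φⁿ ≥ −δ on Ω (so ρ̃ⁿ ≥ 0), assume all integrands appearing below are integrable over Ω, and assume the following five integral identities hold: (i) ∫_Ω p ∇·(φ̃^{n+1} v) dx = 0; (ii) 0 = ∫_Ω ((ρ̃ⁿ + ρ̃^{n+1})/2)((v − vⁿ)/τ)·v dx + (1/2)∫_Ω (ρ φⁿ v − ρ M ε ∇μ)·∇(vⁿ·v) dx − ∫_Ω p ∇·(φ̃^{n+1} v) dx + ∫_Ω 2γ ∇^s v : ∇v dx + ∫_Ω ρ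 D |v|² dx + ∫_Ω σ φⁿ v·∇μ dx; (iii) 0 = ∫_Ω σ ((φ^{n+1} − φⁿ)/τ) μ dx + ∫_Ω σ M ε |∇μ|² dx − ∫_Ω σ φⁿ v·∇μ dx; (iv) 0 = −∫_Ω μ σ (φ^{n+1} − φⁿ)/τ dx + ∫_Ω ((W_c'(φ^{n+1}) + W_e'(φⁿ))/ε) σ (φ^{n+1} − φⁿ)/τ dx + ∫_Ω ε ∇φ^{n+1} · ∇(σ(φ^{n+1} − φⁿ)/τ) dx; (v) 0 = ∫_Ω ((φ^{n+1} − φⁿ)/τ)(ρ/2) vⁿ·v dx + ∫_Ω M ε ∇μ · ∇((ρ/2) vⁿ·v) dx − ∫_Ω φⁿ v · ∇((ρ/2) vⁿ·v) dx. Define the discrete free energy F[φ, u] = ∫_Ω (1/2) ρ(φ + δ) |u|² + σ(W(φ)/ε + (ε/2)|∇φ|²) dx. Then (1/τ)(F[φ^{n+1}, v] − F[φⁿ, vⁿ]) ≤ −∫_Ω (2γ ∇^s v : ∇v + ρ D |v|² + σ M ε |∇μ|²) dx ≤ 0; in particular F[φ^{n+1}, v] ≤ F[φⁿ, vⁿ].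 -/

import Mathlib

/-!
Adding the five tested identities, the pressure term vanishes by (i) and the surface-tension
and advective cross terms cancel in pairs. The time differences are then rewritten by the
identities
`((ρ̃ⁿ + ρ̃ⁿ⁺¹)/2)(v - vⁿ)·v + ρ(φⁿ⁺¹ - φⁿ)vⁿ·v/2 = (ρ̃ⁿ⁺¹|v|² - ρ̃ⁿ|vⁿ|² + ρ̃ⁿ|v - vⁿ|²)/2` and
`∇φⁿ⁺¹·∇(φⁿ⁺¹ - φⁿ) = (|∇φⁿ⁺¹|² - |∇φⁿ|² + |∇(φⁿ⁺¹ - φⁿ)|²)/2`,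
whose numerical-dissipation remainders are nonnegative because `ρ̃ⁿ ≥ 0`, while the tangent-line
inequalities for the convex part at `φⁿ⁺¹` and the concave part at `φⁿ` bound the increment of
`W` by the discrete chemical potential. The physical dissipation is nonnegative since
`∇ˢv : ∇v = |∇ˢv|²`.
-/

open scoped RealInnerProductSpace
open MeasureTheory

/-- The divergence `∇·F(x) = Σ_i ∂_i F_i(x)` of a vector field `F : ℝ^ν → ℝ^ν`. -/
noncomputable def ediv {ν : ℕ} (F : EuclideanSpace ℝ (Fin ν) → EuclideanSpace ℝ (Fin ν))
    (x : EuclideanSpace ℝ (Fin ν)) : ℝ :=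
  ∑ i, fderiv ℝ (fun y => F y i) x (EuclideanSpace.single i 1)

/-- The Jacobian matrix `(DF(x))_{ij} = ∂_j F_i(x)` of a vector field. -/
noncomputable def jacobian {ν : ℕ} (F : EuclideanSpace ℝ (Fin ν) → EuclideanSpace ℝ (Fin ν))
    (x : EuclideanSpace ℝ (Fin ν)) (i j : Fin ν) : ℝ :=
  fderiv ℝ (fun y => F y i) x (EuclideanSpace.single j 1)

/-- The Frobenius product `∇^s F : ∇F` of the symmetric gradient
`∇^s F = (1/2)(DF + DFᵀ)` with the Jacobian `DF`, at `x`. -/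
noncomputable def symGradFrob {ν : ℕ}
    (F : EuclideanSpace ℝ (Fin ν) → EuclideanSpace ℝ (Fin ν))
    (x : EuclideanSpace ℝ (Fin ν)) : ℝ :=
  ∑ i, ∑ j, ((1/2) * (jacobian F x i j + jacobian F x j i)) * jacobian F x i j

/-- The discrete free energy
`F[φ, u] = ∫_Ω (1/2)ρ(φ+δ)|u|² + σ(W(φ)/ε + (ε/2)|∇φ|²) dx`. -/
noncomputable def discreteFreeEnergy {ν : ℕ} (Ω : Set (EuclideanSpace ℝ (Fin ν)))
    (ρ δ σ ε : ℝ) (W : ℝ → ℝ) (φ : EuclideanSpace ℝ (Fin ν) → ℝ)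
    (u : EuclideanSpace ℝ (Fin ν) → EuclideanSpace ℝ (Fin ν)) : ℝ :=
  ∫ x in Ω, ((1/2) * ρ * (φ x + δ) * ‖u x‖^2
    + σ * ((W (φ x)) / ε + (ε/2) * ‖gradient φ x‖^2))

open Set

theorem sum_sum_symmPart_mul_nonneg {ι : Type*} [Fintype ι] (J : ι → ι → ℝ) :
    0 ≤ ∑ i, ∑ j, ((1/2) * (J i j + J j i)) * J i j := by
  have hswap : ∑ i, ∑ j, ((1/2) * (J i j + J j i)) * J j i
      = ∑ i, ∑ j, ((1/2) * (J i j + J j i)) * J i j := by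
    rw [Finset.sum_comm]
    exact Finset.sum_congr rfl fun i _ => Finset.sum_congr rfl fun j _ => by ring
  have hsq : 2 * ∑ i, ∑ j, ((1/2) * (J i j + J j i)) * J i j
      = ∑ i, ∑ j, (1/2) * (J i j + J j i) ^ 2 := by
    rw [two_mul]
    nth_rewrite 1 [← hswap]
    simp only [← Finset.sum_add_distrib]
    exact Finset.sum_congr rfl fun i _ => Finset.sum_congr rfl fun j _ => by ring
  have : 0 ≤ ∑ i, ∑ j, (1/2 : ℝ) * (J i j + J j i) ^ 2 := by positivity
  linarith

theorem symGradFrob_nonneg {ν : ℕ} (F : EuclideanSpace ℝ (Fin ν) → EuclideanSpace ℝ (Fin ν))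
    (x : EuclideanSpace ℝ (Fin ν)) : 0 ≤ symGradFrob F x :=
  sum_sum_symmPart_mul_nonneg (jacobian F x)

theorem ConvexOn.deriv_mul_sub_le {S : Set ℝ} {f : ℝ → ℝ} (hf : ConvexOn ℝ S f) {a b : ℝ}
    (ha : a ∈ S) (hb : b ∈ S) (hfa : DifferentiableAt ℝ f a) :
    deriv f a * (b - a) ≤ f b - f a := by
  rcases lt_trichotomy a b with hab | rfl | hba
  · have := hf.deriv_le_slope ha hb hab hfa
    rwa [slope_def_field, le_div_iff₀ (sub_pos.mpr hab)] at this
  · simp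
  · have := hf.slope_le_deriv hb ha hba hfa
    rw [slope_def_field, div_le_iff₀ (sub_pos.mpr hba)] at this
    linarith

theorem ConcaveOn.sub_le_deriv_mul {S : Set ℝ} {f : ℝ → ℝ} (hf : ConcaveOn ℝ S f) {a b : ℝ}
    (ha : a ∈ S) (hb : b ∈ S) (hfa : DifferentiableAt ℝ f a) :
    f b - f a ≤ deriv f a * (b - a) := by
  have := hf.neg.deriv_mul_sub_le ha hb hfa.neg
  simp only [Pi.neg_apply, deriv.neg'] at this
  linarith

theorem convex_concave_split_sub_le {Wc We : ℝ → ℝ}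
    (hWc : ConvexOn ℝ univ Wc) (hWe : ConcaveOn ℝ univ We) {a b : ℝ}
    (hWc' : DifferentiableAt ℝ Wc b) (hWe' : DifferentiableAt ℝ We a) :
    Wc b + We b - (Wc a + We a) ≤ (deriv Wc b + deriv We a) * (b - a) := by
  have hc := hWc.deriv_mul_sub_le (mem_univ b) (mem_univ a) hWc'
  have he := hWe.sub_le_deriv_mul (mem_univ a) (mem_univ b) hWe'
  linarith

section Gradient

variable {F : Type*} [NormedAddCommGroup F] [InnerProductSpace ℝ F] [CompleteSpace F]

theorem gradient_const_mul (c : ℝ) (f : F → ℝ) (x : F) :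
    gradient (fun y => c * f y) x = c • gradient f x := by
  have : (fun y => c * f y) = c • f := rfl
  rw [gradient, this, fderiv_const_smul_field, Pi.smul_apply, map_smul]
  rfl

theorem gradient_sub {f g : F → ℝ} {x : F} (hf : DifferentiableAt ℝ f x)
    (hg : DifferentiableAt ℝ g x) :
    gradient (fun y => f y - g y) x = gradient f x - gradient g x := by
  rw [gradient, fderiv_fun_sub hf hg, map_sub]
  rfl

end Gradient

theorem real_inner_sub_right_eq_half {E : Type*} [NormedAddCommGroup E] [InnerProductSpace ℝ E]
    (a b : E) : ⟪b, b - a⟫ = (‖b‖ ^ 2 - ‖a‖ ^ 2 + ‖b - a‖ ^ 2) / 2 := by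
  rw [inner_sub_right, real_inner_self_eq_norm_sq, norm_sub_sq_real, real_inner_comm]
  ring

section Integral

variable {α : Type*} [MeasurableSpace α] {μ : Measure α}

theorem integral_kinetic_increment {E : Type*} [NormedAddCommGroup E] [InnerProductSpace ℝ E]
    (ρ δ τ : ℝ) {φ ψ : α → ℝ} {u w : α → E}
    (hA : Integrable (fun x => ((ρ * (φ x + δ) + ρ * (ψ x + δ)) / 2) * (⟪w x - u x, w x⟫ / τ)) μ)
    (hB : Integrable (fun x => ((ψ x - φ x) / τ) * ((ρ / 2) * ⟪u x, w x⟫)) μ)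
    (hφ : Integrable (fun x => (φ x + δ) * ‖u x‖ ^ 2) μ)
    (hψ : Integrable (fun x => (ψ x + δ) * ‖w x‖ ^ 2) μ)
    (hrem : Integrable (fun x => (φ x + δ) * ‖w x - u x‖ ^ 2) μ) :
    (∫ x, ((ρ * (φ x + δ) + ρ * (ψ x + δ)) / 2) * (⟪w x - u x, w x⟫ / τ) ∂μ)
      + ∫ x, ((ψ x - φ x) / τ) * ((ρ / 2) * ⟪u x, w x⟫) ∂μ
      = ρ / (2 * τ) * ((∫ x, (ψ x + δ) * ‖w x‖ ^ 2 ∂μ) - (∫ x, (φ x + δ) * ‖u x‖ ^ 2 ∂μ)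
          + ∫ x, (φ x + δ) * ‖w x - u x‖ ^ 2 ∂μ) := by
  rw [← integral_add hA hB, ← integral_sub hψ hφ, ← integral_add (hψ.sub' hφ) hrem,
    ← integral_const_mul]
  refine integral_congr_ae (.of_forall fun x => ?_)
  simp only [inner_sub_left, real_inner_self_eq_norm_sq, norm_sub_sq_real, real_inner_comm (u x)]
  ring

theorem integral_convex_concave_split_le {Wc We : ℝ → ℝ}
    (hWc : ConvexOn ℝ univ Wc) (hWc' : Differentiable ℝ Wc)
    (hWe : ConcaveOn ℝ univ We) (hWe' : Differentiable ℝ We)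
    {σ ε τ : ℝ} (hσ : 0 ≤ σ) (hε : 0 ≤ ε) (hτ : 0 ≤ τ) {φ ψ : α → ℝ}
    (hφ : Integrable (fun x => Wc (φ x) + We (φ x)) μ)
    (hψ : Integrable (fun x => Wc (ψ x) + We (ψ x)) μ)
    (hd : Integrable
      (fun x => ((deriv Wc (ψ x) + deriv We (φ x)) / ε) * σ * ((ψ x - φ x) / τ)) μ) :
    σ / (ε * τ) * ((∫ x, Wc (ψ x) + We (ψ x) ∂μ) - ∫ x, Wc (φ x) + We (φ x) ∂μ)
      ≤ ∫ x, ((deriv Wc (ψ x) + deriv We (φ x)) / ε) * σ * ((ψ x - φ x) / τ) ∂μ := by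
  rw [← integral_sub hψ hφ, ← integral_const_mul]
  refine integral_mono ((hψ.sub' hφ).const_mul _) hd fun x => ?_
  calc σ / (ε * τ) * (Wc (ψ x) + We (ψ x) - (Wc (φ x) + We (φ x)))
      ≤ σ / (ε * τ) * ((deriv Wc (ψ x) + deriv We (φ x)) * (ψ x - φ x)) :=
        mul_le_mul_of_nonneg_left
          (convex_concave_split_sub_le hWc hWe (hWc' _) (hWe' _)) (by positivity)
    _ = ((deriv Wc (ψ x) + deriv We (φ x)) / ε) * σ * ((ψ x - φ x) / τ) := by ring

variable {F : Type*} [NormedAddCommGroup F] [InnerProductSpace ℝ F] [CompleteSpace F]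
  [MeasurableSpace F] {μ : Measure F}

theorem integral_inner_gradient_increment (σ ε τ : ℝ) {φ ψ : F → ℝ}
    (hφ : Differentiable ℝ φ) (hψ : Differentiable ℝ ψ)
    (hφ2 : Integrable (fun x => ‖gradient φ x‖ ^ 2) μ)
    (hψ2 : Integrable (fun x => ‖gradient ψ x‖ ^ 2) μ)
    (hrem : Integrable (fun x => ‖gradient ψ x - gradient φ x‖ ^ 2) μ) :
    ∫ x, ε * ⟪gradient ψ x, gradient (fun y => σ * ((ψ y - φ y) / τ)) x⟫ ∂μ
      = σ * ε / (2 * τ) * ((∫ x, ‖gradient ψ x‖ ^ 2 ∂μ) - (∫ x, ‖gradient φ x‖ ^ 2 ∂μ)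
          + ∫ x, ‖gradient ψ x - gradient φ x‖ ^ 2 ∂μ) := by
  rw [← integral_sub hψ2 hφ2, ← integral_add (hψ2.sub' hφ2) hrem, ← integral_const_mul]
  refine integral_congr_ae (.of_forall fun x => ?_)
  have hgrad : gradient (fun y => σ * ((ψ y - φ y) / τ)) x
      = (σ / τ) • (gradient ψ x - gradient φ x) := by
    have : (fun y => σ * ((ψ y - φ y) / τ)) = fun y => (σ / τ) * (ψ y - φ y) :=
      funext fun y => by ring
    rw [this, gradient_const_mul, gradient_sub (hψ x) (hφ x)]
  dsimp only
  rw [hgrad, real_inner_smul_right, real_inner_sub_right_eq_half]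
  ring

theorem integral_advection_split (ρ M ε : ℝ) {f q g : F → ℝ} {w : F → F}
    (hA : Integrable (fun x => ⟪f x • w x, gradient (fun y => (ρ / 2) * g y) x⟫) μ)
    (hB : Integrable (fun x => M * ε * ⟪gradient q x, gradient (fun y => (ρ / 2) * g y) x⟫) μ) :
    (1 / 2) * ∫ x, ⟪(ρ * f x) • w x - (ρ * M * ε) • gradient q x, gradient g x⟫ ∂μ
      = (∫ x, ⟪f x • w x, gradient (fun y => (ρ / 2) * g y) x⟫ ∂μ)
        - ∫ x, M * ε * ⟪gradient q x, gradient (fun y => (ρ / 2) * g y) x⟫ ∂μ := by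
  rw [← integral_sub hA hB, ← integral_const_mul]
  refine integral_congr_ae (.of_forall fun x => ?_)
  simp only [gradient_const_mul, inner_sub_left, real_inner_smul_left, real_inner_smul_right]
  ring

end Integral

theorem discreteFreeEnergy_eq {ν : ℕ} (Ω : Set (EuclideanSpace ℝ (Fin ν))) (ρ δ σ ε : ℝ)
    (W : ℝ → ℝ) (φ : EuclideanSpace ℝ (Fin ν) → ℝ)
    (u : EuclideanSpace ℝ (Fin ν) → EuclideanSpace ℝ (Fin ν))
    (hK : IntegrableOn (fun x => (φ x + δ) * ‖u x‖ ^ 2) Ω)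
    (hW : IntegrableOn (fun x => W (φ x)) Ω)
    (hG : IntegrableOn (fun x => ‖gradient φ x‖ ^ 2) Ω) :
    discreteFreeEnergy Ω ρ δ σ ε W φ u
      = ρ / 2 * (∫ x in Ω, (φ x + δ) * ‖u x‖ ^ 2) + σ / ε * (∫ x in Ω, W (φ x))
        + σ * ε / 2 * ∫ x in Ω, ‖gradient φ x‖ ^ 2 := by
  rw [discreteFreeEnergy, ← integral_const_mul, ← integral_const_mul, ← integral_const_mul,
    ← integral_add (hK.const_mul _) (hW.const_mul _),
    ← integral_add ((hK.const_mul _).fun_add (hW.const_mul _)) (hG.const_mul _)]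
  refine integral_congr_ae (.of_forall fun x => ?_)
  dsimp only
  ring

theorem stmt_15_general {ν : ℕ} (Ω : Set (EuclideanSpace ℝ (Fin ν))) (hΩ : MeasurableSet Ω)
    (ρ δ σ ε τ M γ : ℝ)
    (hρ : 0 < ρ) (hσ : 0 < σ) (hε : 0 < ε) (hτ : 0 < τ)
    (hM : 0 < M) (hγ : 0 < γ)
    (Wc We : ℝ → ℝ)
    (hWc_conv : ConvexOn ℝ Set.univ Wc) (hWc_diff : Differentiable ℝ Wc)
    (hWe_conc : ConcaveOn ℝ Set.univ We) (hWe_diff : Differentiable ℝ We)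
    (φn φ1 μ : EuclideanSpace ℝ (Fin ν) → ℝ)
    (p D : EuclideanSpace ℝ (Fin ν) → ℝ)
    (vn v : EuclideanSpace ℝ (Fin ν) → EuclideanSpace ℝ (Fin ν))
    (hφn : Differentiable ℝ φn) (hφ1 : Differentiable ℝ φ1)
    (hD : ∀ x, 0 ≤ D x)
    (hφnδ : ∀ x ∈ Ω, -δ ≤ φn x)
    -- integrability of the integrands appearing below
    (hint₂ : IntegrableOn
      (fun x => ((ρ*(φn x + δ) + ρ*(φ1 x + δ))/2) * (⟪v x - vn x, v x⟫ / τ)) Ω)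
    (hint₄ : IntegrableOn (fun x => 2*γ*symGradFrob v x) Ω)
    (hint₅ : IntegrableOn (fun x => ρ * D x * ‖v x‖^2) Ω)
    (hint₈ : IntegrableOn (fun x => σ * M * ε * ‖gradient μ x‖^2) Ω)
    (hint₉ : IntegrableOn
      (fun x => ((deriv Wc (φ1 x) + deriv We (φn x))/ε) * σ * ((φ1 x - φn x)/τ)) Ω)
    (hint₁₁ : IntegrableOn
      (fun x => ((φ1 x - φn x)/τ) * ((ρ/2) * ⟪vn x, v x⟫)) Ω)
    (hint₁₂ : IntegrableOn
      (fun x => M * ε * ⟪gradient μ x, gradient (fun y => (ρ/2) * ⟪vn y, v y⟫) x⟫) Ω)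
    (hint₁₃ : IntegrableOn
      (fun x => ⟪φn x • v x, gradient (fun y => (ρ/2) * ⟪vn y, v y⟫) x⟫) Ω)
    (hint₁₄ : IntegrableOn (fun x => (φn x + δ) * ‖vn x‖^2) Ω)
    (hint₁₅ : IntegrableOn (fun x => (φ1 x + δ) * ‖v x‖^2) Ω)
    (hint₁₆ : IntegrableOn (fun x => Wc (φn x) + We (φn x)) Ω)
    (hint₁₇ : IntegrableOn (fun x => Wc (φ1 x) + We (φ1 x)) Ω)
    (hint₁₈ : IntegrableOn (fun x => ‖gradient φn x‖^2) Ω)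
    (hint₁₉ : IntegrableOn (fun x => ‖gradient φ1 x‖^2) Ω)
    (hint₂₀ : IntegrableOn (fun x => (φn x + δ) * ‖v x - vn x‖^2) Ω)
    (hint₂₁ : IntegrableOn (fun x => ‖gradient φ1 x - gradient φn x‖^2) Ω)
    -- (i) the tested incompressibility equation
    (hi : ∫ x in Ω, p x * ediv (fun y => (2*δ + (1 - 2*δ) * φ1 y) • v y) x = 0)
    -- (ii) the momentum equation tested with v = v^{n+1}
    (hii : (0:ℝ) =
      (∫ x in Ω, ((ρ*(φn x + δ) + ρ*(φ1 x + δ))/2) * (⟪v x - vn x, v x⟫ / τ))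
      + (1/2) * (∫ x in Ω, ⟪(ρ * φn x) • v x - (ρ*M*ε) • gradient μ x,
          gradient (fun y => ⟪vn y, v y⟫) x⟫)
      - (∫ x in Ω, p x * ediv (fun y => (2*δ + (1 - 2*δ) * φ1 y) • v y) x)
      + (∫ x in Ω, 2*γ*symGradFrob v x)
      + (∫ x in Ω, ρ * D x * ‖v x‖^2)
      + (∫ x in Ω, σ * φn x * ⟪v x, gradient μ x⟫))
    -- (iii) the phase-field equation tested with σμ^{n+1}
    (hiii : (0:ℝ) =
      (∫ x in Ω, σ * ((φ1 x - φn x)/τ) * μ x)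
      + (∫ x in Ω, σ * M * ε * ‖gradient μ x‖^2)
      - (∫ x in Ω, σ * φn x * ⟪v x, gradient μ x⟫))
    -- (iv) the chemical-potential equation tested with -σ(φ^{n+1}-φⁿ)/τ
    (hiv : (0:ℝ) =
      - (∫ x in Ω, μ x * σ * ((φ1 x - φn x)/τ))
      + (∫ x in Ω, ((deriv Wc (φ1 x) + deriv We (φn x))/ε) * σ * ((φ1 x - φn x)/τ))
      + (∫ x in Ω, ε * ⟪gradient φ1 x, gradient (fun y => σ * ((φ1 y - φn y)/τ)) x⟫))
    -- (v) the phase-field equation tested with (ρ/2)vⁿ·v^{n+1}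
    (hv' : (0:ℝ) =
      (∫ x in Ω, ((φ1 x - φn x)/τ) * ((ρ/2) * ⟪vn x, v x⟫))
      + (∫ x in Ω, M * ε * ⟪gradient μ x, gradient (fun y => (ρ/2) * ⟪vn y, v y⟫) x⟫)
      - (∫ x in Ω, ⟪φn x • v x, gradient (fun y => (ρ/2) * ⟪vn y, v y⟫) x⟫)) :
    (1/τ) * (discreteFreeEnergy Ω ρ δ σ ε (fun s => Wc s + We s) φ1 v
        - discreteFreeEnergy Ω ρ δ σ ε (fun s => Wc s + We s) φn vn)
      ≤ - ∫ x in Ω,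
          (2*γ*symGradFrob v x + ρ * D x * ‖v x‖^2 + σ*M*ε*‖gradient μ x‖^2) ∧
    (- ∫ x in Ω,
        (2*γ*symGradFrob v x + ρ * D x * ‖v x‖^2 + σ*M*ε*‖gradient μ x‖^2)) ≤ 0 ∧
    discreteFreeEnergy Ω ρ δ σ ε (fun s => Wc s + We s) φ1 v
      ≤ discreteFreeEnergy Ω ρ δ σ ε (fun s => Wc s + We s) φn vn := by
  have hcross := integral_advection_split ρ M ε hint₁₃ hint₁₂
  have hkin := integral_kinetic_increment ρ δ τ hint₂ hint₁₁ hint₁₄ hint₁₅ hint₂₀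
  have hgrad := integral_inner_gradient_increment σ ε τ hφn hφ1 hint₁₈ hint₁₉ hint₂₁
  have hpot := integral_convex_concave_split_le hWc_conv hWc_diff hWe_conc hWe_diff
    hσ.le hε.le hτ.le hint₁₆ hint₁₇ hint₉
  have hμ_comm : ∫ x in Ω, μ x * σ * ((φ1 x - φn x) / τ)
      = ∫ x in Ω, σ * ((φ1 x - φn x) / τ) * μ x := by
    congr 1 with x
    ring
  have hrem : 0 ≤ ρ / (2 * τ) * (∫ x in Ω, (φn x + δ) * ‖v x - vn x‖ ^ 2)
      + σ * ε / (2 * τ) * ∫ x in Ω, ‖gradient φ1 x - gradient φn x‖ ^ 2 := by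
    have hkin_rem : 0 ≤ ∫ x in Ω, (φn x + δ) * ‖v x - vn x‖ ^ 2 :=
      setIntegral_nonneg hΩ fun x hx => mul_nonneg (by linarith [hφnδ x hx]) (sq_nonneg _)
    have hgrad_rem : 0 ≤ ∫ x in Ω, ‖gradient φ1 x - gradient φn x‖ ^ 2 :=
      integral_nonneg fun _ => sq_nonneg _
    positivity
  have hdiss : 0 ≤ ∫ x in Ω,
      (2*γ*symGradFrob v x + ρ * D x * ‖v x‖^2 + σ*M*ε*‖gradient μ x‖^2) :=
    integral_nonneg fun x => by have := symGradFrob_nonneg v x; have := hD x; positivity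
  have hstep : (1/τ) * (discreteFreeEnergy Ω ρ δ σ ε (fun s => Wc s + We s) φ1 v
        - discreteFreeEnergy Ω ρ δ σ ε (fun s => Wc s + We s) φn vn)
      ≤ - ∫ x in Ω,
          (2*γ*symGradFrob v x + ρ * D x * ‖v x‖^2 + σ*M*ε*‖gradient μ x‖^2) := by
    rw [discreteFreeEnergy_eq _ _ _ _ _ _ _ _ hint₁₅ hint₁₇ hint₁₉,
      discreteFreeEnergy_eq _ _ _ _ _ _ _ _ hint₁₄ hint₁₆ hint₁₈,
      integral_add (hint₄.fun_add hint₅) hint₈, integral_add hint₄ hint₅]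
    linear_combination
      hpot + hrem - hkin - hgrad - hii - hiii - hiv - hv' - hcross + hi + hμ_comm
  refine ⟨hstep, neg_nonpos.mpr hdiss, ?_⟩
  exact sub_nonpos.mp (nonpos_of_mul_nonpos_right (hstep.trans (neg_nonpos.mpr hdiss))
    (one_div_pos.mpr hτ))

/-- Theorem 4.1: discrete thermodynamic consistency of the fully discrete
Cahn–Hilliard Navier–Stokes scheme.  Under the tested variational identities
(i)–(v) of the scheme, the discrete free energy satisfies
`(1/τ)(F[φ^{n+1}, v] - F[φⁿ, vⁿ]) ≤ -∫_Ω (2γ∇^s v:∇v + ρD|v|² + σMε|∇μ|²) ≤ 0`,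
and in particular `F[φ^{n+1}, v] ≤ F[φⁿ, vⁿ]`. -/
theorem stmt_15 {ν : ℕ} (Ω : Set (EuclideanSpace ℝ (Fin ν))) (hΩ : MeasurableSet Ω)
    (ρ δ σ ε τ M γ : ℝ)
    (hρ : 0 < ρ) (hδ : 0 < δ) (hσ : 0 < σ) (hε : 0 < ε) (hτ : 0 < τ)
    (hM : 0 < M) (hγ : 0 < γ)
    (Wc We : ℝ → ℝ)
    (hWc_conv : ConvexOn ℝ Set.univ Wc) (hWc_diff : Differentiable ℝ Wc)
    (hWe_conc : ConcaveOn ℝ Set.univ We) (hWe_diff : Differentiable ℝ We)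
    (φn φ1 μ : EuclideanSpace ℝ (Fin ν) → ℝ)
    (p D : EuclideanSpace ℝ (Fin ν) → ℝ)
    (vn v : EuclideanSpace ℝ (Fin ν) → EuclideanSpace ℝ (Fin ν))
    (hφn : Differentiable ℝ φn) (hφ1 : Differentiable ℝ φ1)
    (hμ : Differentiable ℝ μ)
    (hvn : Differentiable ℝ vn) (hv : Differentiable ℝ v)
    (hD : ∀ x, 0 ≤ D x)
    (hφnδ : ∀ x ∈ Ω, -δ ≤ φn x)
    -- integrability of the integrands appearing below
    (hint₁ : IntegrableOn
      (fun x => p x * ediv (fun y => (2*δ + (1 - 2*δ) * φ1 y) • v y) x) Ω)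
    (hint₂ : IntegrableOn
      (fun x => ((ρ*(φn x + δ) + ρ*(φ1 x + δ))/2) * (⟪v x - vn x, v x⟫ / τ)) Ω)
    (hint₃ : IntegrableOn
      (fun x => ⟪(ρ * φn x) • v x - (ρ*M*ε) • gradient μ x,
        gradient (fun y => ⟪vn y, v y⟫) x⟫) Ω)
    (hint₄ : IntegrableOn (fun x => 2*γ*symGradFrob v x) Ω)
    (hint₅ : IntegrableOn (fun x => ρ * D x * ‖v x‖^2) Ω)
    (hint₆ : IntegrableOn (fun x => σ * φn x * ⟪v x, gradient μ x⟫) Ω)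
    (hint₇ : IntegrableOn (fun x => σ * ((φ1 x - φn x)/τ) * μ x) Ω)
    (hint₈ : IntegrableOn (fun x => σ * M * ε * ‖gradient μ x‖^2) Ω)
    (hint₉ : IntegrableOn
      (fun x => ((deriv Wc (φ1 x) + deriv We (φn x))/ε) * σ * ((φ1 x - φn x)/τ)) Ω)
    (hint₁₀ : IntegrableOn
      (fun x => ε * ⟪gradient φ1 x, gradient (fun y => σ * ((φ1 y - φn y)/τ)) x⟫) Ω)
    (hint₁₁ : IntegrableOn
      (fun x => ((φ1 x - φn x)/τ) * ((ρ/2) * ⟪vn x, v x⟫)) Ω)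
    (hint₁₂ : IntegrableOn
      (fun x => M * ε * ⟪gradient μ x, gradient (fun y => (ρ/2) * ⟪vn y, v y⟫) x⟫) Ω)
    (hint₁₃ : IntegrableOn
      (fun x => ⟪φn x • v x, gradient (fun y => (ρ/2) * ⟪vn y, v y⟫) x⟫) Ω)
    (hint₁₄ : IntegrableOn (fun x => (φn x + δ) * ‖vn x‖^2) Ω)
    (hint₁₅ : IntegrableOn (fun x => (φ1 x + δ) * ‖v x‖^2) Ω)
    (hint₁₆ : IntegrableOn (fun x => Wc (φn x) + We (φn x)) Ω)
    (hint₁₇ : IntegrableOn (fun x => Wc (φ1 x) + We (φ1 x)) Ω)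
    (hint₁₈ : IntegrableOn (fun x => ‖gradient φn x‖^2) Ω)
    (hint₁₉ : IntegrableOn (fun x => ‖gradient φ1 x‖^2) Ω)
    (hint₂₀ : IntegrableOn (fun x => (φn x + δ) * ‖v x - vn x‖^2) Ω)
    (hint₂₁ : IntegrableOn (fun x => ‖gradient φ1 x - gradient φn x‖^2) Ω)
    (hint₂₂ : IntegrableOn (fun x => (φ1 x - φn x) * ⟪vn x, v x⟫) Ω)
    -- (i) the tested incompressibility equation
    (hi : ∫ x in Ω, p x * ediv (fun y => (2*δ + (1 - 2*δ) * φ1 y) • v y) x = 0)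
    -- (ii) the momentum equation tested with v = v^{n+1}
    (hii : (0:ℝ) =
      (∫ x in Ω, ((ρ*(φn x + δ) + ρ*(φ1 x + δ))/2) * (⟪v x - vn x, v x⟫ / τ))
      + (1/2) * (∫ x in Ω, ⟪(ρ * φn x) • v x - (ρ*M*ε) • gradient μ x,
          gradient (fun y => ⟪vn y, v y⟫) x⟫)
      - (∫ x in Ω, p x * ediv (fun y => (2*δ + (1 - 2*δ) * φ1 y) • v y) x)
      + (∫ x in Ω, 2*γ*symGradFrob v x)
      + (∫ x in Ω, ρ * D x * ‖v x‖^2)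
      + (∫ x in Ω, σ * φn x * ⟪v x, gradient μ x⟫))
    -- (iii) the phase-field equation tested with σμ^{n+1}
    (hiii : (0:ℝ) =
      (∫ x in Ω, σ * ((φ1 x - φn x)/τ) * μ x)
      + (∫ x in Ω, σ * M * ε * ‖gradient μ x‖^2)
      - (∫ x in Ω, σ * φn x * ⟪v x, gradient μ x⟫))
    -- (iv) the chemical-potential equation tested with -σ(φ^{n+1}-φⁿ)/τ
    (hiv : (0:ℝ) =
      - (∫ x in Ω, μ x * σ * ((φ1 x - φn x)/τ))
      + (∫ x in Ω, ((deriv Wc (φ1 x) + deriv We (φn x))/ε) * σ * ((φ1 x - φn x)/τ))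
      + (∫ x in Ω, ε * ⟪gradient φ1 x, gradient (fun y => σ * ((φ1 y - φn y)/τ)) x⟫))
    -- (v) the phase-field equation tested with (ρ/2)vⁿ·v^{n+1}
    (hv' : (0:ℝ) =
      (∫ x in Ω, ((φ1 x - φn x)/τ) * ((ρ/2) * ⟪vn x, v x⟫))
      + (∫ x in Ω, M * ε * ⟪gradient μ x, gradient (fun y => (ρ/2) * ⟪vn y, v y⟫) x⟫)
      - (∫ x in Ω, ⟪φn x • v x, gradient (fun y => (ρ/2) * ⟪vn y, v y⟫) x⟫)) :
    (1/τ) * (discreteFreeEnergy Ω ρ δ σ ε (fun s => Wc s + We s) φ1 v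
        - discreteFreeEnergy Ω ρ δ σ ε (fun s => Wc s + We s) φn vn)
      ≤ - ∫ x in Ω,
          (2*γ*symGradFrob v x + ρ * D x * ‖v x‖^2 + σ*M*ε*‖gradient μ x‖^2) ∧
    (- ∫ x in Ω,
        (2*γ*symGradFrob v x + ρ * D x * ‖v x‖^2 + σ*M*ε*‖gradient μ x‖^2)) ≤ 0 ∧
    discreteFreeEnergy Ω ρ δ σ ε (fun s => Wc s + We s) φ1 v
      ≤ discreteFreeEnergy Ω ρ δ σ ε (fun s => Wc s + We s) φn vn :=
  stmt_15_general Ω hΩ ρ δ σ ε τ M γ hρ hσ hε hτ hM hγ Wc We hWc_conv hWc_diff hWe_conc hWe_diff φn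
    φ1 μ p D vn v hφn hφ1 hD hφnδ hint₂ hint₄ hint₅ hint₈ hint₉ hint₁₁ hint₁₂ hint₁₃ hint₁₄ hint₁₅
    hint₁₆ hint₁₇ hint₁₈ hint₁₉ hint₂₀ hint₂₁ hi hii hiii hiv hv'
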